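/- Let M, a, s be positive integers with M > 1 such that ∑_{i=0}^{M-1} (a+i)^2 = s^2. If M = 12·m₁ + 11 for a nonnegative integer m₁, then for every integer α ≥ 2 one has m₁ ≢ 3·2^(α-2) − 1 (mod 2^α). -/

import Mathlib

/-!
Put `b = a - 1` and `N = M + 1`, so that `s² + b² = ∑_{i<N} (b + i)²`. The excluded residue class
of `m₁` is exactly the condition `N = 12 (m₁ + 1) = 2^α u` with `u ≡ 1 (mod 4)`, and then the closed
form of the sum of squares gives `3 (s² + b²) ≡ 2^(α-1) (mod 2^(α+1))`. No sum of two squares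
satisfies `3 (x² + y²) ≡ 2^k (mod 2^(k+2))`: for `k = 0, 1` check modulo 4 and 8; for `k ≥ 2` the
congruence forces `x` and `y` to be even, and dividing by 4 lowers `k` by 2.
-/

open Finset

lemma two_dvd_and_two_dvd_of_four_dvd_sq_add_sq {x y : ℤ} (h : 4 ∣ x ^ 2 + y ^ 2) :
    2 ∣ x ∧ 2 ∣ y := by
  have key : ∀ u v : ZMod 4, u ^ 2 + v ^ 2 = 0 → 2 * u = 0 ∧ 2 * v = 0 := by decide
  have h2 : ((2 * x : ℤ) : ZMod 4) = 0 ∧ ((2 * y : ℤ) : ZMod 4) = 0 := by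
    push_cast
    exact key x y (by exact_mod_cast (ZMod.intCast_zmod_eq_zero_iff_dvd _ 4).mpr h)
  simp only [ZMod.intCast_zmod_eq_zero_iff_dvd] at h2
  omega

lemma three_mul_sq_add_sq_not_modEq_two_pow (k : ℕ) (x y : ℤ) :
    ¬ 3 * (x ^ 2 + y ^ 2) ≡ 2 ^ k [ZMOD 2 ^ (k + 2)] := by
  induction k using Nat.twoStepInduction generalizing x y with
  | zero =>
    have key : ∀ u v : ZMod 4, 3 * (u ^ 2 + v ^ 2) ≠ 1 := by decide
    intro h
    exact key x y (by exact_mod_cast (ZMod.intCast_eq_intCast_iff _ _ 4).mpr h)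
  | one =>
    have key : ∀ u v : ZMod 8, 3 * (u ^ 2 + v ^ 2) ≠ 2 := by decide
    intro h
    exact key x y (by exact_mod_cast (ZMod.intCast_eq_intCast_iff _ _ 8).mpr h)
  | more k ih _ =>
    intro h
    have h4 : (4 : ℤ) ∣ x ^ 2 + y ^ 2 := by
      have h4' : (4 : ℤ) ∣ 3 * (x ^ 2 + y ^ 2) - 2 ^ (k + 2) :=
        (Dvd.intro_left (2 ^ (k + 2)) (by ring)).trans h.symm.dvd
      have : (4 : ℤ) ∣ 2 ^ (k + 2) := Dvd.intro_left (2 ^ k) (by ring)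
      omega
    obtain ⟨⟨x, rfl⟩, ⟨y, rfl⟩⟩ := two_dvd_and_two_dvd_of_four_dvd_sq_add_sq h4
    refine ih x y (Int.ModEq.mul_left_cancel' (c := 4) (by norm_num) ?_)
    convert h using 1 <;> ring

lemma six_mul_sum_range_add_sq (b : ℤ) (n : ℕ) :
    6 * ∑ i ∈ range n, (b + i) ^ 2 = n * (6 * b ^ 2 + 6 * (n - 1) * b + (n - 1) * (2 * n - 1)) := by
  induction n with
  | zero => simp
  | succ n ih =>
    rw [sum_range_succ, mul_add, ih]
    push_cast
    ring

lemma three_mul_sum_range_add_sq_modEq (b : ℤ) {k u : ℕ} (hk : 1 ≤ k) (hu : u ≡ 1 [MOD 4]) :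
    3 * ∑ i ∈ range (2 ^ (k + 1) * u), (b + i) ^ 2 ≡ 2 ^ k [ZMOD 2 ^ (k + 2)] := by
  obtain ⟨j, rfl⟩ : ∃ j, k = j + 1 := ⟨k - 1, by omega⟩
  obtain ⟨v, rfl⟩ : ∃ v, u = 4 * v + 1 := ⟨u / 4, by unfold Nat.ModEq at hu; omega⟩
  obtain ⟨c, hc⟩ := Int.even_mul_pred_self b
  have hsum := six_mul_sum_range_add_sq b (2 ^ (j + 1 + 1) * (4 * v + 1))
  push_cast at hsum
  set P : ℤ := 2 ^ j
  set U : ℤ := 4 * v + 1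
  -- the quotient `(2^k - 3 ∑) / 2^(k+2)`, read off from the closed form with `N = 4PU`, `b(b-1) = 2c`
  refine Int.modEq_iff_dvd.mpr
    ⟨-(3 * U * c + 6 * P * U ^ 2 * b + v + 8 * P ^ 2 * U ^ 3 - 3 * P * U ^ 2), ?_⟩
  apply mul_left_cancel₀ (two_ne_zero (α := ℤ))
  linear_combination -hsum - 24 * P * U * hc

lemma exists_add_one_eq_of_modEq_three_mul_two_pow_sub_one {m j : ℕ}
    (h : m ≡ 3 * 2 ^ j - 1 [MOD 2 ^ (j + 2)]) : ∃ q, m + 1 = 2 ^ j * (4 * q + 3) := by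
  have hpow : 2 ^ (j + 2) = 4 * 2 ^ j := by ring
  have hpos : 0 < 2 ^ j := by positivity
  have hmod : m % 2 ^ (j + 2) = 3 * 2 ^ j - 1 := by
    rw [h, Nat.mod_eq_of_lt (by omega)]
  refine ⟨m / 2 ^ (j + 2), ?_⟩
  have hdiv := Nat.div_add_mod m (2 ^ (j + 2))
  rw [hmod, hpow] at hdiv
  rw [hpow]
  generalize m / (4 * 2 ^ j) = q at hdiv ⊢
  generalize 2 ^ j = P at *
  ring_nf at hdiv ⊢
  omega

theorem stmt_general (M a s m₁ : ℕ)
    (hsum : ∑ i ∈ Finset.range M, (a + i) ^ 2 = s ^ 2)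
    (hMeq : M = 12 * m₁ + 11) :
    ∀ α : ℕ, 2 ≤ α → ¬ m₁ ≡ 3 * 2 ^ (α - 2) - 1 [MOD 2 ^ α] := by
  intro α hα hcong
  obtain ⟨j, rfl⟩ : ∃ j, α = j + 2 := ⟨α - 2, by omega⟩
  obtain ⟨q, hq⟩ := exists_add_one_eq_of_modEq_three_mul_two_pow_sub_one hcong
  have hN : M + 1 = 2 ^ (j + 2) * (12 * q + 9) := by rw [hMeq, pow_add]; linear_combination 12 * hq
  have hshift : ∑ i ∈ range (M + 1), ((a : ℤ) - 1 + i) ^ 2 = s ^ 2 + ((a : ℤ) - 1) ^ 2 := by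
    have hsumZ : ∑ i ∈ range M, ((a : ℤ) + i) ^ 2 = s ^ 2 := by exact_mod_cast hsum
    rw [sum_range_succ', ← hsumZ]
    push_cast
    congr 1
    · exact sum_congr rfl fun i _ ↦ by ring
    · ring
  have hmod := three_mul_sum_range_add_sq_modEq ((a : ℤ) - 1) (k := j + 1) (u := 12 * q + 9)
    le_add_self (by unfold Nat.ModEq; omega)
  rw [← hN, hshift] at hmod
  exact three_mul_sq_add_sq_not_modEq_two_pow (j + 1) s (a - 1) hmod

theorem stmt (M a s m₁ : ℕ) (hM : 1 < M) (ha : 1 ≤ a) (hs : 1 ≤ s)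
    (hsum : ∑ i ∈ Finset.range M, (a + i) ^ 2 = s ^ 2)
    (hMeq : M = 12 * m₁ + 11) :
    ∀ α : ℕ, 2 ≤ α → ¬ m₁ ≡ 3 * 2 ^ (α - 2) - 1 [MOD 2 ^ α] :=
  stmt_general M a s m₁ hsum hMeq
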